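/- Let p be a prime, n ≥ 1, and A an n×n matrix with natural number entries that is balanced: for every index i, d_i := Σ_j A_{ij} = Σ_j A_{ji}. Let D be the diagonal matrix with D_{ii} = 2·d_i, let k = Σ_i d_i, let L = D − A − Aᵀ, and let κ be the determinant of the matrix obtained from L by deleting its first row and first column (with κ = 1 when n = 1). Suppose p does not divide k·κ. Let M(T) = det(D − (1+T)·A − (1+T)^{−1}·Aᵀ) ∈ ℤ_p[[T]]. Then there exists a unit u(T) of ℤ_p[[T]] such that M(T) = T²·u(T). In particular M(T) is not divisible by p and its T-adic order is exactly 2. -/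

import Mathlib

open PowerSeries

/-- The power series `M(T) = det(D − (1+T)·A − (1+T)⁻¹·Aᵀ)` attached to a directed multigraph
with adjacency matrix `A`, where `D` is the diagonal matrix of total degrees and `S` denotes
the inverse of `1 + T` in `ℤ_p[[T]]`. -/
noncomputable def Mser (p : ℕ) [Fact p.Prime] {n : ℕ} (A : Matrix (Fin n) (Fin n) ℕ)
    (S : PowerSeries ℤ_[p]) : PowerSeries ℤ_[p] :=
  (Matrix.of fun i j =>
      Matrix.diagonal (fun i => (((∑ j, A i j) + (∑ j, A j i) : ℕ) : PowerSeries ℤ_[p])) i j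
        - (1 + PowerSeries.X) * ((A i j : ℕ) : PowerSeries ℤ_[p])
        - S * ((A j i : ℕ) : PowerSeries ℤ_[p])).det

/-- The Laplacian matrix `L = D − A − Aᵀ` over `ℤ` of a balanced directed multigraph,
where `D` is the diagonal matrix with entries `2·d_i = ∑_j A_{ij} + ∑_j A_{ji}`. -/
def LaplacianMat {n : ℕ} (A : Matrix (Fin n) (Fin n) ℕ) : Matrix (Fin n) (Fin n) ℤ :=
  Matrix.of fun i j =>
    Matrix.diagonal (fun i => (2 * (∑ j, A i j) : ℤ)) i j - (A i j : ℤ) - (A j i : ℤ)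

/-!
Write `B = D − (1+T)·A − (1+T)⁻¹·Aᵀ` and `d_j = ∑_k A_{jk}`. For a balanced graph the `j`-th
column of `B` sums to `(2 − (1+T) − (1+T)⁻¹)·d_j = −T²(1+T)⁻¹·d_j`, so replacing the first row
of `B` by the sum of all rows gives `det B = −T²(1+T)⁻¹·det B'`, where `B'` has first row `d`.
Modulo `T`, `B'` is the Laplacian `L` with first row replaced by `d`. The other rows of `L` sum
to zero, so adding all columns to the first one turns that column into `(k, 0, …, 0)`: the
constant coefficient of `det B'` is `k·κ`, a `p`-adic unit.
-/

open Matrix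

theorem PadicInt.isUnit_intCast_of_not_dvd {p : ℕ} [Fact p.Prime] {k : ℤ}
    (hk : ¬ (p : ℤ) ∣ k) : IsUnit (k : ℤ_[p]) := by
  rw [PadicInt.isUnit_iff]
  rw [← PadicInt.norm_int_lt_one_iff_dvd] at hk
  exact le_antisymm (PadicInt.norm_le_one _) (not_lt.mp hk)

namespace Matrix

variable {R : Type*} [CommRing R] {n : ℕ}

theorem det_updateRow_sum_rows {ι : Type*} [Fintype ι] [DecidableEq ι] (M : Matrix ι ι R)
    (i : ι) : (M.updateRow i (∑ k, M k)).det = M.det := by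
  simpa using det_updateRow_sum M i 1

theorem det_updateRow_zero_of_sum_row_succ_eq_zero (M : Matrix (Fin (n + 1)) (Fin (n + 1)) R)
    (v : Fin (n + 1) → R) (hM : ∀ i : Fin n, ∑ j, M i.succ j = 0) :
    (M.updateRow 0 v).det = (∑ j, v j) * (M.submatrix Fin.succ Fin.succ).det := by
  set N := M.updateRow 0 v
  have hcol : (N.updateCol 0 fun k => ∑ j, N k j).det = N.det := by
    simpa using det_updateCol_sum N 0 1
  rw [← hcol, det_succ_column_zero, Fin.sum_univ_succ]
  simp [N, updateRow_apply, hM, submatrix]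

end Matrix

section TwistedLaplacian

variable {R : Type*} [CommRing R] {ι : Type*} [Fintype ι] [DecidableEq ι]

/-- `D − a·A − b·Aᵀ`; `Mser p A S` is the determinant of `twistedLaplacian A (1 + X) S`. -/
def twistedLaplacian (A : Matrix ι ι ℕ) (a b : R) : Matrix ι ι R :=
  of fun i j => diagonal (fun i => ((∑ j, A i j + ∑ j, A j i : ℕ) : R)) i j
    - a * (A i j : R) - b * (A j i : R)

variable (A : Matrix ι ι ℕ)

theorem twistedLaplacian_transpose (a b : R) :
    (twistedLaplacian A a b)ᵀ = twistedLaplacian A b a := by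
  ext i j
  simp only [transpose_apply, twistedLaplacian, of_apply, diagonal_apply, eq_comm (a := j)]
  split_ifs with h
  · subst h; ring
  · ring

theorem twistedLaplacian_map {R' : Type*} [CommRing R'] (f : R →+* R') (a b : R) :
    (twistedLaplacian A a b).map f = twistedLaplacian A (f a) (f b) := by
  ext i j
  simp [twistedLaplacian, diagonal_apply, apply_ite f]

theorem sum_twistedLaplacian_row (hbal : ∀ i, ∑ j, A i j = ∑ j, A j i) (a b : R) (i : ι) :
    ∑ j, twistedLaplacian A a b i j = (2 - a - b) * ((∑ j, A i j : ℕ) : R) := by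
  have hbal' : ∑ j, (A j i : R) = ∑ j, (A i j : R) := by
    rw [← Nat.cast_sum, ← Nat.cast_sum, hbal i]
  simp only [twistedLaplacian, of_apply, Finset.sum_sub_distrib, ← Finset.mul_sum,
    diagonal_apply, Finset.sum_ite_eq, Finset.mem_univ, if_true]
  push_cast
  rw [hbal']
  ring

theorem sum_twistedLaplacian_col (hbal : ∀ i, ∑ j, A i j = ∑ j, A j i) (a b : R) (j : ι) :
    ∑ i, twistedLaplacian A a b i j = (2 - a - b) * ((∑ k, A j k : ℕ) : R) := by
  calc ∑ i, twistedLaplacian A a b i j = ∑ i, (twistedLaplacian A a b)ᵀ j i := rfl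
    _ = (2 - b - a) * ((∑ k, A j k : ℕ) : R) := by
      rw [twistedLaplacian_transpose, sum_twistedLaplacian_row A hbal]
    _ = (2 - a - b) * ((∑ k, A j k : ℕ) : R) := by ring

theorem det_twistedLaplacian (hbal : ∀ i, ∑ j, A i j = ∑ j, A j i) (a b : R) (i₀ : ι) :
    (twistedLaplacian A a b).det =
      (2 - a - b) * ((twistedLaplacian A a b).updateRow i₀ fun j => ((∑ k, A j k : ℕ) : R)).det := by
  have hrows : ∑ i, twistedLaplacian A a b i = (2 - a - b) • fun j => ((∑ k, A j k : ℕ) : R) := by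
    funext j
    exact (Finset.sum_apply j _ _).trans (sum_twistedLaplacian_col A hbal a b j)
  rw [← det_updateRow_smul, ← hrows, det_updateRow_sum_rows]

theorem twistedLaplacian_one_one {n : ℕ} {A : Matrix (Fin n) (Fin n) ℕ}
    (hbal : ∀ i, ∑ j, A i j = ∑ j, A j i) :
    twistedLaplacian A (1 : R) 1 = (LaplacianMat A).map (Int.castRingHom R) := by
  rw [← map_one (Int.castRingHom R), ← twistedLaplacian_map]
  congr 1
  ext i j
  simp only [twistedLaplacian, LaplacianMat, of_apply, diagonal_apply, ← hbal i]
  push_cast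
  split_ifs <;> ring

theorem det_updateRow_zero_twistedLaplacian_one_one {n : ℕ}
    {A : Matrix (Fin (n + 1)) (Fin (n + 1)) ℕ} (hbal : ∀ i, ∑ j, A i j = ∑ j, A j i) :
    ((twistedLaplacian A (1 : R) 1).updateRow 0 fun j => ((∑ k, A j k : ℕ) : R)).det =
      ((∑ i, ∑ j, A i j : ℕ) : R) * ((LaplacianMat A).submatrix Fin.succ Fin.succ).det := by
  rw [det_updateRow_zero_of_sum_row_succ_eq_zero _ _ fun i => by
      rw [sum_twistedLaplacian_row A hbal]; ring,
    twistedLaplacian_one_one hbal, submatrix_map, Nat.cast_sum]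
  exact congrArg _ (RingHom.map_det _ _).symm

end TwistedLaplacian

/-- For a balanced directed multigraph (`∑_j A_{ij} = ∑_j A_{ji}` for every `i`), if `p` does
not divide `k·κ`, where `k = ∑_i d_i` is the total degree and `κ` is the determinant of the
Laplacian with first row and column deleted, then `M(T) = det(D − (1+T)A − (1+T)⁻¹Aᵀ)` factors
as `T²·u(T)` for a unit `u(T)` of `ℤ_p[[T]]`: the associated constant `ℤ_p`-tower has `μ = 0`
and `λ = 1`. -/
theorem Mser_eq_Xsq_mul_unit (p : ℕ) [Fact p.Prime] (n : ℕ)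
    (A : Matrix (Fin (n + 1)) (Fin (n + 1)) ℕ)
    (hbal : ∀ i, (∑ j, A i j) = ∑ j, A j i)
    (hreg : ¬ ((p : ℤ) ∣ ((∑ i, ∑ j, A i j : ℕ) : ℤ) *
      ((LaplacianMat A).submatrix Fin.succ Fin.succ).det))
    (S : PowerSeries ℤ_[p]) (hS : S * (1 + PowerSeries.X) = 1) :
    ∃ u : (PowerSeries ℤ_[p])ˣ, Mser p A S = PowerSeries.X ^ 2 * (u : PowerSeries ℤ_[p]) := by
  set N := (twistedLaplacian A (1 + X) S).updateRow 0 fun j => ((∑ k, A j k : ℕ) : ℤ_[p]⟦X⟧)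
  have hS₀ : constantCoeff S = 1 := by simpa using congrArg constantCoeff hS
  have hfactor : 2 - (1 + X) - S = X ^ 2 * -S := by linear_combination (X - 1) * hS
  have hN₀ : constantCoeff N.det =
      ((((∑ i, ∑ j, A i j : ℕ) : ℤ) * ((LaplacianMat A).submatrix Fin.succ Fin.succ).det : ℤ) :
        ℤ_[p]) := by
    rw [RingHom.map_det, RingHom.mapMatrix_apply, map_updateRow, twistedLaplacian_map]
    simp only [map_add, map_one, constantCoeff_X, add_zero, hS₀, Function.comp_def, map_natCast]
    rw [det_updateRow_zero_twistedLaplacian_one_one hbal]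
    push_cast
    rfl
  have hunit : IsUnit (-S * N.det) := by
    rw [isUnit_iff_constantCoeff, map_mul, map_neg, hS₀, hN₀, neg_one_mul]
    exact (PadicInt.isUnit_intCast_of_not_dvd hreg).neg
  refine ⟨hunit.unit, ?_⟩
  rw [IsUnit.unit_spec, ← mul_assoc, ← hfactor]
  exact det_twistedLaplacian A hbal _ _ 0
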